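/- Let K be a field, let S ⊆ ℕ^d be the additive submonoid generated by g_1, …, g_n, let ψ : K[Z_1,…,Z_n] → K[Y_1,…,Y_d] be the K-algebra homomorphism with ψ(Z_i) = Y^{g_i}, let J_S = ker ψ, let I = X + S be an ideal of S with X = {u_1, …, u_r} ⊆ S, choose factorizations a_k ∈ ℕ^n of u_k, and set P_S = J_S + (Z^{a_1}, …, Z^{a_r}). Then S \ I is a finite set if and only if the quotient ring K[Z_1,…,Z_n]/P_S is finite-dimensional as a K-vector space (i.e., P_S is a zero-dimensional ideal). -/

import Mathlib

/-!
`ψ` is the map `Z^b ↦ Y^{φ b}` along `φ b = ∑ bᵢ gᵢ`, so it maps `K[Z]` onto the span `K[S]` of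
the `Y^s`, `s ∈ S`. Because `I + S ⊆ I` and every element of `I` is `u_k + φ b`, it maps the
monomial ideal `(Z^{a_k})` onto the span `K[I]` of the `Y^s`, `s ∈ I`. Hence
`P_S = ker ψ + (Z^{a_k}) = ψ⁻¹ K[I]`, and reading off the coefficients of `ψ f` on `S \ I`
identifies `K[Z] / P_S` with the free vector space on `S \ I`.
-/

open MvPolynomial Pointwise

lemma AddMonoidAlgebra.mul_mem_supported {R M : Type*} [Semiring R] [Add M] {s t u : Set M}
    (hstu : s + t ⊆ u) {p q : AddMonoidAlgebra R M} (hp : p ∈ supported R R s)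
    (hq : q ∈ supported R R t) : p * q ∈ supported R R u := by
  classical
  rw [mem_supported] at *
  calc (↑(p * q).coeff.support : Set M) ⊆ ↑(p.coeff.support + q.coeff.support) :=
        Finset.coe_subset.mpr (support_coeff_mul_subset p q)
    _ ⊆ s + t := by rw [Finset.coe_add]; exact Set.add_subset_add hp hq
    _ ⊆ u := hstu

lemma AddSubmonoid.coe_add_add_coe_subset {M : Type*} [AddCommMonoid M] (R : Set M)
    (T : AddSubmonoid M) : (T : Set M) + (R + T) ⊆ R + T := by
  rw [add_left_comm]
  exact Set.add_subset_add_left (coe_add_self_eq T).subset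

lemma AddSubmonoid.mem_closure_range_iff_exists_linearCombination {ι M : Type*}
    [AddCommMonoid M] {g : ι → M} {x : M} :
    x ∈ closure (Set.range g) ↔ ∃ b, Finsupp.linearCombination ℕ g b = x := by
  simp [mem_closure_range_iff, Finsupp.linearCombination_apply, eq_comm]

section CommSemiring

variable {σ ι M : Type*} [AddCommMonoid M]

/-- The map `ψ : Z^b ↦ Y^{∑ bᵢ gᵢ}` of the paper, with values in the semigroup ring `K[M]`. -/
noncomputable def semigroupAlgHom (K : Type*) [CommSemiring K] (g : σ → M) :
    MvPolynomial σ K →ₐ[K] AddMonoidAlgebra K M :=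
  AddMonoidAlgebra.mapDomainAlgHom K K (Finsupp.linearCombination ℕ g).toAddMonoidHom

noncomputable def monomialIdeal (K : Type*) [CommSemiring K] (a : ι → σ →₀ ℕ) :
    Ideal (MvPolynomial σ K) :=
  Ideal.span (Set.range fun k => monomial (a k) 1)

def semigroupIdeal (g : σ → M) (a : ι → σ →₀ ℕ) : Set M :=
  Set.range (fun k => Finsupp.linearCombination ℕ g (a k)) +
    (AddSubmonoid.closure (Set.range g) : Set M)

variable {K : Type*} [CommSemiring K] (g : σ → M) (a : ι → σ →₀ ℕ)

lemma coeff_semigroupAlgHom (f : MvPolynomial σ K) :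
    (semigroupAlgHom K g f).coeff =
      (AddMonoidAlgebra.coeff f).mapDomain (Finsupp.linearCombination ℕ g) :=
  rfl

lemma semigroupAlgHom_monomial (b : σ →₀ ℕ) (c : K) :
    semigroupAlgHom K g (monomial b c) = .single (Finsupp.linearCombination ℕ g b) c := by
  simp [semigroupAlgHom, ← single_eq_monomial]

lemma semigroupAlgHom_X (i : σ) : semigroupAlgHom K g (X i) = .single (g i) 1 := by
  rw [X, semigroupAlgHom_monomial, Finsupp.linearCombination_single, one_smul]

lemma semigroupAlgHom_mem_supported (f : MvPolynomial σ K) :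
    semigroupAlgHom K g f ∈
      AddMonoidAlgebra.supported K K (AddSubmonoid.closure (Set.range g) : Set M) := by
  classical
  rw [AddMonoidAlgebra.mem_supported, coeff_semigroupAlgHom]
  refine (Finset.coe_subset.mpr Finsupp.mapDomain_support).trans fun m hm => ?_
  obtain ⟨b, -, rfl⟩ := Finset.mem_image.mp hm
  exact AddSubmonoid.mem_closure_range_iff_exists_linearCombination.mpr ⟨b, rfl⟩

lemma range_semigroupAlgHom :
    LinearMap.range (semigroupAlgHom K g).toLinearMap =
      AddMonoidAlgebra.supported K K (AddSubmonoid.closure (Set.range g) : Set M) := by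
  refine le_antisymm ?_ ?_
  · rintro _ ⟨f, rfl⟩
    exact semigroupAlgHom_mem_supported g f
  · rw [AddMonoidAlgebra.supported_eq_span_single, Submodule.span_le]
    rintro _ ⟨m, hm, rfl⟩
    obtain ⟨b, rfl⟩ := AddSubmonoid.mem_closure_range_iff_exists_linearCombination.mp hm
    exact ⟨monomial b 1, semigroupAlgHom_monomial g b 1⟩

lemma map_semigroupAlgHom_monomialIdeal :
    ((monomialIdeal K a).restrictScalars K).map (semigroupAlgHom K g).toLinearMap =
      AddMonoidAlgebra.supported K K (semigroupIdeal g a) := by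
  refine le_antisymm ?_ ?_
  · rw [Submodule.map_le_iff_le_comap]
    intro f hf
    induction hf using Submodule.span_induction with
    | mem _ hx =>
      obtain ⟨k, rfl⟩ := hx
      rw [Submodule.mem_comap, AlgHom.toLinearMap_apply, semigroupAlgHom_monomial,
        AddMonoidAlgebra.mem_supported, AddMonoidAlgebra.coeff_single]
      refine (Finset.coe_subset.mpr Finsupp.support_single_subset).trans ?_
      simpa [semigroupIdeal] using Set.add_mem_add (Set.mem_range_self k)
        (zero_mem (AddSubmonoid.closure (Set.range g)))
    | zero => exact zero_mem _
    | add _ _ _ _ hx hy => exact add_mem hx hy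
    | smul c _ _ hx =>
      rw [Submodule.mem_comap, AlgHom.toLinearMap_apply, smul_eq_mul, map_mul]
      exact AddMonoidAlgebra.mul_mem_supported (AddSubmonoid.coe_add_add_coe_subset _ _)
        (semigroupAlgHom_mem_supported g c) hx
  · rw [AddMonoidAlgebra.supported_eq_span_single, Submodule.span_le]
    rintro _ ⟨_, ⟨_, ⟨k, rfl⟩, _, hm, rfl⟩, rfl⟩
    obtain ⟨b, rfl⟩ := AddSubmonoid.mem_closure_range_iff_exists_linearCombination.mp hm
    refine ⟨monomial (a k + b) 1, ?_, by simp [semigroupAlgHom_monomial]⟩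
    rw [show monomial (a k + b) (1 : K) = monomial (a k) 1 * monomial b 1 by
      rw [monomial_mul, one_mul]]
    exact Ideal.mul_mem_right _ _ (Ideal.subset_span ⟨k, rfl⟩)

end CommSemiring

section CommRing

variable {σ ι M K : Type*} [AddCommMonoid M] [CommRing K] (g : σ → M) (a : ι → σ →₀ ℕ)

lemma mem_ker_sup_monomialIdeal_iff (f : MvPolynomial σ K) :
    f ∈ RingHom.ker (semigroupAlgHom K g) ⊔ monomialIdeal K a ↔
      semigroupAlgHom K g f ∈ AddMonoidAlgebra.supported K K (semigroupIdeal g a) := by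
  rw [← map_semigroupAlgHom_monomialIdeal, ← AlgHom.toLinearMap_apply, ← Submodule.mem_comap,
    Submodule.comap_map_eq, ← Submodule.restrictScalars_mem K, Submodule.restrictScalars_sup,
    sup_comm]
  rfl

noncomputable def restrictCoeff (s : Set M) : MvPolynomial σ K →ₗ[K] (s →₀ K) :=
  Finsupp.lsubtypeDomain s ∘ₗ (AddMonoidAlgebra.coeffLinearEquiv K).toLinearMap ∘ₗ
    (semigroupAlgHom K g).toLinearMap

lemma restrictCoeff_surjective {s : Set M} (hs : s ⊆ AddSubmonoid.closure (Set.range g)) :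
    Function.Surjective (restrictCoeff (K := K) g s) := by
  classical
  intro x
  obtain ⟨f, hf⟩ : AddMonoidAlgebra.ofCoeff x.extendDomain ∈
      LinearMap.range (semigroupAlgHom K g).toLinearMap := by
    rw [range_semigroupAlgHom, AddMonoidAlgebra.mem_supported]
    exact (Finsupp.support_extendDomain_subset x).trans hs
  refine ⟨f, ?_⟩
  rw [AlgHom.toLinearMap_apply] at hf
  simp [restrictCoeff, hf, Finsupp.lsubtypeDomain_apply]

lemma ker_restrictCoeff_sdiff_semigroupIdeal :
    LinearMap.ker (restrictCoeff (K := K) g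
        ((AddSubmonoid.closure (Set.range g) : Set M) \ semigroupIdeal g a)) =
      (RingHom.ker (semigroupAlgHom K g) ⊔ monomialIdeal K a).restrictScalars K := by
  ext f
  rw [Submodule.restrictScalars_mem, mem_ker_sup_monomialIdeal_iff, LinearMap.mem_ker,
    AddMonoidAlgebra.mem_supported']
  have hvanish := AddMonoidAlgebra.mem_supported'.mp (semigroupAlgHom_mem_supported g f)
  constructor
  · intro h m hmI
    by_cases hmS : m ∈ AddSubmonoid.closure (Set.range g)
    · exact congr($h ⟨m, hmS, hmI⟩)
    · exact hvanish m hmS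
  · intro h
    ext ⟨m, -, hmI⟩
    exact h m hmI

noncomputable def quotientEquivFinsuppSdiff :
    (MvPolynomial σ K ⧸ (RingHom.ker (semigroupAlgHom K g) ⊔ monomialIdeal K a)) ≃ₗ[K]
      (↥((AddSubmonoid.closure (Set.range g) : Set M) \ semigroupIdeal g a) →₀ K) :=
  let P := RingHom.ker (semigroupAlgHom K g) ⊔ monomialIdeal K a
  let L := restrictCoeff (K := K) g
    ((AddSubmonoid.closure (Set.range g) : Set M) \ semigroupIdeal g a)
  have hP : P.restrictScalars K = LinearMap.ker L :=
    (ker_restrictCoeff_sdiff_semigroupIdeal g a).symm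
  (Submodule.Quotient.restrictScalarsEquiv K P).symm ≪≫ₗ Submodule.quotEquivOfEq _ _ hP ≪≫ₗ
    L.quotKerEquivOfSurjective (restrictCoeff_surjective g Set.sdiff_subset)

end CommRing

theorem finiteDimensional_quotient_iff_finite_sdiff {σ ι M K : Type*} [AddCommMonoid M]
    [Field K] (g : σ → M) (a : ι → σ →₀ ℕ) :
    FiniteDimensional K (MvPolynomial σ K ⧸ (RingHom.ker (semigroupAlgHom K g) ⊔ monomialIdeal K a))
      ↔ ((AddSubmonoid.closure (Set.range g) : Set M) \ semigroupIdeal g a).Finite := by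
  refine (Module.Finite.equiv_iff (quotientEquivFinsuppSdiff g a)).trans ?_
  rw [Module.finite_finsupp_self_iff, Set.finite_coe_iff, or_iff_right (not_subsingleton K)]

lemma ker_eq_ker_semigroupAlgHom {σ τ K : Type*} [Finite τ] [CommSemiring K] (g : σ → τ → ℕ)
    (ψ : MvPolynomial σ K →ₐ[K] MvPolynomial τ K)
    (hψ : ∀ i, ψ (X i) = monomial (Finsupp.equivFunOnFinite.symm (g i)) 1) :
    RingHom.ker ψ = RingHom.ker (semigroupAlgHom K g) := by
  let e := AddMonoidAlgebra.domCongr K K (Finsupp.addEquivFunOnFinite (ι := τ) (M := ℕ))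
  have hcomp : e.toAlgHom.comp ψ = semigroupAlgHom K g :=
    algHom_ext fun i => by
      simp only [e, AlgHom.comp_apply, hψ, semigroupAlgHom_X, ← single_eq_monomial,
        AlgEquiv.coe_toAlgHom, AddMonoidAlgebra.domCongr_single]
      rfl
  ext f
  rw [RingHom.mem_ker, RingHom.mem_ker, ← hcomp, AlgHom.comp_apply]
  exact (map_eq_zero_iff _ e.injective).symm

theorem stmt17_general {d n r : ℕ} (K : Type*) [Field K]
    (g : Fin n → (Fin d → ℕ))
    (S : AddSubmonoid (Fin d → ℕ)) (hS : S = AddSubmonoid.closure (Set.range g))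
    (ψ : MvPolynomial (Fin n) K →ₐ[K] MvPolynomial (Fin d) K)
    (hψ : ∀ i, ψ (X i) = monomial (Finsupp.equivFunOnFinite.symm (g i)) 1)
    (u : Fin r → (Fin d → ℕ))
    (I : Set (Fin d → ℕ)) (hI : I = Set.range u + (S : Set (Fin d → ℕ)))
    (a : Fin r → (Fin n → ℕ)) (ha : ∀ k, ∑ j, a k j • g j = u k)
    (PS : Ideal (MvPolynomial (Fin n) K))
    (hPS : PS = RingHom.ker ψ + Ideal.span {m : MvPolynomial (Fin n) K |
        ∃ k, m = monomial (Finsupp.equivFunOnFinite.symm (a k)) 1}) :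
    ((S : Set (Fin d → ℕ)) \ I).Finite ↔
      FiniteDimensional K (MvPolynomial (Fin n) K ⧸ PS) := by
  let a' k := Finsupp.equivFunOnFinite.symm (a k)
  have hu : u = fun k => Finsupp.linearCombination ℕ g (a' k) := by
    funext k
    simp [a', ← ha k, Finsupp.linearCombination_apply, Finsupp.sum_fintype]
  have hmonomials : {m : MvPolynomial (Fin n) K | ∃ k, m = monomial (a' k) 1} =
      Set.range fun k => monomial (a' k) 1 := by
    ext
    simp [eq_comm]
  rw [hPS, hI, hS, hu, Submodule.add_eq_sup, hmonomials, ker_eq_ker_semigroupAlgHom g ψ hψ]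
  exact (finiteDimensional_quotient_iff_finite_sdiff g a').symm

/-- Let `S = ⟨g_1, …, g_n⟩ ⊆ ℕ^d`, `I = X + S` an ideal of `S` with
`X = {u_1, …, u_r} ⊆ S`, `ψ : K[Z] → K[Y]` the map `Z_i ↦ Y^{g_i}`,
`J_S = ker ψ` and `P_S = J_S + (Z^{a_1}, …, Z^{a_r})` for chosen factorizations
`a_k` of the `u_k`. Then `S \ I` is finite iff `K[Z]/P_S` is a
finite-dimensional `K`-vector space. -/
theorem stmt17 {d n r : ℕ} (K : Type*) [Field K]
    (g : Fin n → (Fin d → ℕ))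
    (S : AddSubmonoid (Fin d → ℕ)) (hS : S = AddSubmonoid.closure (Set.range g))
    (ψ : MvPolynomial (Fin n) K →ₐ[K] MvPolynomial (Fin d) K)
    (hψ : ∀ i, ψ (X i) = monomial (Finsupp.equivFunOnFinite.symm (g i)) 1)
    (u : Fin r → (Fin d → ℕ)) (hu : ∀ k, u k ∈ S)
    (I : Set (Fin d → ℕ)) (hI : I = Set.range u + (S : Set (Fin d → ℕ)))
    (a : Fin r → (Fin n → ℕ)) (ha : ∀ k, ∑ j, a k j • g j = u k)
    (PS : Ideal (MvPolynomial (Fin n) K))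
    (hPS : PS = RingHom.ker ψ + Ideal.span {m : MvPolynomial (Fin n) K |
        ∃ k, m = monomial (Finsupp.equivFunOnFinite.symm (a k)) 1}) :
    ((S : Set (Fin d → ℕ)) \ I).Finite ↔
      FiniteDimensional K (MvPolynomial (Fin n) K ⧸ PS) :=
  stmt17_general K g S hS ψ hψ u I hI a ha PS hPS
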